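/- Let p be a prime and i, j ≥ 1 integers. Let r be the least natural number with i + j ≤ p^r · i (i.e., r = ⌈log_p((i+j)/i)⌉; note r ≥ 1), and set M := ⌊(i+j−1)/p^{r−1}⌋. Then in the power series ring ℤ_p[[T]], with q := 1 + T, the element [p^r]_q^{i−1} · ∏_{m=1}^{M} [m]_{q^{p^r}} divides the q-factorial [p(i+j−1)]_q!. (This divisibility makes well-defined the generator [p(i+j−1)]_{q^{1/p}}! / ([p^r]_{q^{1/p}}^{i−1} φ^r([⌊(i+j−1)/p^{r−1}⌋]_{q^{1/p}}!)) of the slice filtration F^{2j}_S π_{2i} TF(R;ℤ_p) in Theorem 1.2, since φ^r([M]_q!) = ∏_{m=1}^{M} [m]_{q^{p^r}} where φ is the Frobenius q ↦ q^p.) -/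

import Mathlib

open Polynomial

/-- The `q`-integer `[n]_q = 1 + q + ⋯ + q^{n-1}` as a polynomial in `ℤ[q]`. -/
noncomputable def qInt (n : ℕ) : Polynomial ℤ :=
  ∑ k ∈ Finset.range n, X ^ k

/-- The `q`-factorial `[n]_q! = ∏_{k=1}^n [k]_q`. -/
noncomputable def qFact (n : ℕ) : Polynomial ℤ :=
  ∏ k ∈ Finset.Icc 1 n, qInt k

/-- The image of a polynomial `f ∈ ℤ[q]` in `ℤ_p[[T]]` under the substitution `q := 1 + T`. -/
noncomputable def toPS (p : ℕ) [Fact p.Prime] (f : Polynomial ℤ) :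
    PowerSeries (PadicInt p) :=
  Polynomial.aeval (1 + PowerSeries.X) f

/-!
The substitution `q ↦ 1 + T` is a ring map, so it suffices to prove the divisibility in `ℤ[q]`.
There, `[m]_{q^a} · [a]_q = [ma]_q`, so `[a]_q^M · ∏_{m=1}^M [m]_{q^a}` is the product of the
factors `[a]_q, [2a]_q, …, [Ma]_q` of `[Ma]_q!`. With `a = p^r` and `M = ⌊(i+j−1)/p^{r−1}⌋` we
have `Ma ≤ p(i+j−1)`, and minimality of `r` gives `p^{r−1} i ≤ i+j−1`, hence `i − 1 ≤ M`.
-/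

lemma qInt_mul_X_sub_one (n : ℕ) : qInt n * (X - 1) = X ^ n - 1 := by
  simpa [qInt] using geom_sum_mul (X : Polynomial ℤ) n

lemma qInt_mul (m a : ℕ) : qInt (m * a) = (qInt m).comp (X ^ a) * qInt a := by
  have hX : (X - 1 : Polynomial ℤ) ≠ 0 := by simpa using X_sub_C_ne_zero (1 : ℤ)
  refine mul_right_cancel₀ hX ?_
  calc qInt (m * a) * (X - 1) = (X ^ a) ^ m - 1 := by
        rw [qInt_mul_X_sub_one, mul_comm m, pow_mul]
    _ = (qInt m * (X - 1)).comp (X ^ a) := by simp [qInt_mul_X_sub_one, sub_comp]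
    _ = (qInt m).comp (X ^ a) * qInt a * (X - 1) := by
        rw [mul_comp, mul_assoc, qInt_mul_X_sub_one]
        simp [sub_comp]

lemma prod_qInt_mul (M a : ℕ) :
    ∏ m ∈ Finset.Icc 1 M, qInt (m * a) =
      qInt a ^ M * ∏ m ∈ Finset.Icc 1 M, (qInt m).comp (X ^ a) := by
  rw [Finset.prod_congr rfl fun m _ ↦ qInt_mul m a, Finset.prod_mul_distrib, Finset.prod_const,
    Nat.card_Icc, add_tsub_cancel_right, mul_comm]

lemma qFact_dvd_qFact {m n : ℕ} (h : m ≤ n) : qFact m ∣ qFact n :=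
  Finset.prod_dvd_prod_of_subset _ _ _ (Finset.Icc_subset_Icc_right h)

lemma prod_qInt_mul_dvd_qFact (M : ℕ) {a : ℕ} (ha : 0 < a) :
    ∏ m ∈ Finset.Icc 1 M, qInt (m * a) ∣ qFact (M * a) := by
  have hinj : Set.InjOn (· * a) (Finset.Icc 1 M : Set ℕ) :=
    fun _ _ _ _ h ↦ Nat.eq_of_mul_eq_mul_right ha h
  have hsub : (Finset.Icc 1 M).image (· * a) ⊆ Finset.Icc 1 (M * a) := by
    intro x hx
    obtain ⟨m, hm, rfl⟩ := Finset.mem_image.mp hx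
    rw [Finset.mem_Icc] at hm ⊢
    exact ⟨Nat.mul_pos hm.1 ha, Nat.mul_le_mul_right a hm.2⟩
  rw [← Finset.prod_image hinj]
  exact Finset.prod_dvd_prod_of_subset _ _ qInt hsub

lemma qInt_pow_mul_prod_comp_dvd_qFact {a k M N : ℕ} (ha : 0 < a) (hk : k ≤ M)
    (hN : M * a ≤ N) :
    qInt a ^ k * ∏ m ∈ Finset.Icc 1 M, (qInt m).comp (X ^ a) ∣ qFact N :=
  calc qInt a ^ k * ∏ m ∈ Finset.Icc 1 M, (qInt m).comp (X ^ a)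
      ∣ ∏ m ∈ Finset.Icc 1 M, qInt (m * a) := by
        rw [prod_qInt_mul]
        exact mul_dvd_mul_right (pow_dvd_pow _ hk) _
    _ ∣ qFact (M * a) := prod_qInt_mul_dvd_qFact M ha
    _ ∣ qFact N := qFact_dvd_qFact hN

theorem toPS_dvd_qFact_general (p : ℕ) [Fact p.Prime] (i j r : ℕ)
    (hrmin : ∀ r' : ℕ, r' < r → ¬ (i + j ≤ p ^ r' * i)) :
    toPS p (qInt (p ^ r) ^ (i - 1) *
        ∏ m ∈ Finset.Icc 1 ((i + j - 1) / p ^ (r - 1)), (qInt m).comp (X ^ p ^ r)) ∣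
      toPS p (qFact (p * (i + j - 1))) := by
  have hp : 0 < p := (Fact.out : p.Prime).pos
  set M := (i + j - 1) / p ^ (r - 1)
  have hk : i - 1 ≤ M := by
    rcases Nat.eq_zero_or_pos r with rfl | hr
    · simp only [M, zero_tsub, pow_zero, Nat.div_one]
      omega
    have hmin : p ^ (r - 1) * i < i + j := not_le.mp (hrmin (r - 1) (by omega))
    rw [Nat.le_div_iff_mul_le (by positivity)]
    calc (i - 1) * p ^ (r - 1) ≤ p ^ (r - 1) * i := by
          rw [mul_comm]
          exact Nat.mul_le_mul_left _ (Nat.sub_le i 1)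
      _ ≤ i + j - 1 := by omega
  have hN : M * p ^ r ≤ p * (i + j - 1) :=
    calc M * p ^ r ≤ M * p ^ (r - 1) * p := by
          rw [mul_assoc, ← pow_succ]
          exact Nat.mul_le_mul_left M (Nat.pow_le_pow_right hp (by omega))
      _ ≤ p * (i + j - 1) := by
          rw [mul_comm p]
          exact Nat.mul_le_mul_right p (Nat.div_mul_le_self _ _)
  exact map_dvd (Polynomial.aeval (1 + PowerSeries.X))
    (qInt_pow_mul_prod_comp_dvd_qFact (by positivity) hk hN)

/-- let `p` be a prime, `i, j ≥ 1`, let `r` be the least natural number with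
`i + j ≤ p^r · i` (so `r = ⌈log_p((i+j)/i)⌉`), and set `M := ⌊(i+j−1)/p^{r−1}⌋`. Then in
`ℤ_p[[T]]` (with `q := 1 + T`) the element `[p^r]_q^{i−1} · ∏_{m=1}^{M} [m]_{q^{p^r}}`
divides `[p(i+j−1)]_q!`. -/
theorem toPS_dvd_qFact (p : ℕ) [Fact p.Prime] (i j r : ℕ) (hi : 1 ≤ i) (hj : 1 ≤ j)
    (hr : i + j ≤ p ^ r * i) (hrmin : ∀ r' : ℕ, r' < r → ¬ (i + j ≤ p ^ r' * i)) :
    toPS p (qInt (p ^ r) ^ (i - 1) *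
        ∏ m ∈ Finset.Icc 1 ((i + j - 1) / p ^ (r - 1)), (qInt m).comp (X ^ p ^ r)) ∣
      toPS p (qFact (p * (i + j - 1))) :=
  toPS_dvd_qFact_general p i j r hrmin
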